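/- arXiv:math-ph/0107019 — 2 statements merged into one kernel-verified Lean document; each statement's English description precedes it below -/
import Mathlib

section
/- Let n ≥ 2 and consider the multisymplectic phase space P with form ω = dq^i ∧ dp^μ_i ∧ dⁿx_μ + dp ∧ dⁿx. For r = n, a Hamiltonean n-vectorfield X_f satisfying i_{X_f} ω = df is not uniquely determined by f: there exists a nonzero n-vectorfield Y on P with i_Y ω = 0. -/
open scoped BigOperators

/- The multisymplectic phase space over an (n+1)-dimensional space-time (we write the
space-time dimension as `n+1` so that it is positive), with coordinates
`(x^μ, q^i, p^μ_i, p)`. -/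
abbrev MPhase (n N : ℕ) : Type :=
  (Fin (n+1) → ℝ) × (Fin N → ℝ) × (Fin N → Fin (n+1) → ℝ) × ℝ

/-- The multisymplectic `(n+2)`-form
`ω = dq^i ∧ dp^μ_i ∧ dⁿx_μ + dp ∧ dⁿx` on `MPhase n N` (constant coefficients),
written out via determinants:  `dⁿx_μ = (-1)^μ dx^0 ∧ ⋯ (omit μ) ⋯ ∧ dx^n`. -/
noncomputable def multisymplecticForm (n N : ℕ) (v : Fin (n+2) → MPhase n N) : ℝ :=
  (∑ i : Fin N, ∑ μ : Fin (n+1), (-1 : ℝ)^(μ : ℕ) *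
    Matrix.det (Matrix.of fun (k c : Fin (n+2)) =>
      ((Fin.cons (fun z : MPhase n N => z.2.1 i)
        (Fin.cons (fun z : MPhase n N => z.2.2.1 i μ)
          (fun j : Fin n => fun z : MPhase n N => z.1 (μ.succAbove j))) :
            Fin (n+2) → MPhase n N → ℝ) c) (v k)))
  + Matrix.det (Matrix.of fun (k c : Fin (n+2)) =>
      ((Fin.cons (fun z : MPhase n N => z.2.2.2)
        (fun ν : Fin (n+1) => fun z : MPhase n N => z.1 ν) :
            Fin (n+2) → MPhase n N → ℝ) c) (v k))

theorem hamiltonean_multivectorfield_not_unique (n N : ℕ) (hn : 1 ≤ n) (hN : 1 ≤ N) :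
    ∃ Z : Fin (n+1) → (MPhase n N → MPhase n N),
      (∀ z : MPhase n N, LinearIndependent ℝ (fun μ => Z μ z)) ∧
      (∀ (z : MPhase n N) (w : MPhase n N),
        multisymplecticForm n N (Fin.snoc (fun μ => Z μ z) w) = 0) := by
  refine ⟨fun μ _ => (0, 0, fun _ ν' => if ν' = μ then 1 else 0, 0), ?_, ?_⟩
  · intro z
    have hL : LinearIndependent ℝ
        ((LinearMap.proj (⟨0, hN⟩ : Fin N) ∘ₗ
          (LinearMap.fst ℝ (Fin N → Fin (n+1) → ℝ) ℝ) ∘ₗ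
          (LinearMap.snd ℝ (Fin N → ℝ) _) ∘ₗ
          (LinearMap.snd ℝ (Fin (n+1) → ℝ) _)) ∘
          (fun μ => ((0, 0, fun _ ν' => if ν' = μ then 1 else 0, 0) : MPhase n N))) := by
      have : ((LinearMap.proj (⟨0, hN⟩ : Fin N) ∘ₗ
          (LinearMap.fst ℝ (Fin N → Fin (n+1) → ℝ) ℝ) ∘ₗ
          (LinearMap.snd ℝ (Fin N → ℝ) _) ∘ₗ
          (LinearMap.snd ℝ (Fin (n+1) → ℝ) _)) ∘
          (fun μ => ((0, 0, fun _ ν' => if ν' = μ then 1 else 0, 0) : MPhase n N))) =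
          fun μ => Pi.single μ (1 : ℝ) := by
        funext μ
        ext ν'
        simp [Pi.single_apply]
      rw [this]
      have hb := (Pi.basisFun ℝ (Fin (n+1))).linearIndependent
      have hbe : ⇑(Pi.basisFun ℝ (Fin (n+1))) = fun μ => Pi.single μ (1 : ℝ) := by
        funext μ
        simp [Pi.basisFun_apply]
      rwa [hbe] at hb
    exact hL.of_comp _
  · intro z w
    unfold multisymplecticForm
    have h1 : ∀ (i : Fin N) (μ : Fin (n+1)),
        Matrix.det (Matrix.of fun (k c : Fin (n+2)) =>
          ((Fin.cons (fun z : MPhase n N => z.2.1 i)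
            (Fin.cons (fun z : MPhase n N => z.2.2.1 i μ)
              (fun j : Fin n => fun z : MPhase n N => z.1 (μ.succAbove j))) :
                Fin (n+2) → MPhase n N → ℝ) c)
          (((Fin.snoc (fun μ' => ((0, 0, fun _ ν' => if ν' = μ' then 1 else 0, 0) : MPhase n N)) w : Fin (n+2) → MPhase n N)) k)) = 0 := by
      intro i μ
      obtain ⟨ν, hν⟩ : ∃ ν : Fin (n+1), ν ≠ μ := by
        haveI : Nontrivial (Fin (n+1)) := ⟨⟨⟨0, by omega⟩, ⟨1, by omega⟩, by intro h; simpa using congrArg Fin.val h⟩⟩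
        exact exists_ne μ
      apply Matrix.det_eq_zero_of_row_eq_zero (Fin.castSucc ν)
      intro c
      refine Fin.cases ?_ (fun c' => Fin.cases ?_ (fun j => ?_) c') c <;>
        simp [Fin.snoc_castSucc, hν, Ne.symm hν]
    have h2 : Matrix.det (Matrix.of fun (k c : Fin (n+2)) =>
        ((Fin.cons (fun z : MPhase n N => z.2.2.2)
          (fun ν : Fin (n+1) => fun z : MPhase n N => z.1 ν) :
            Fin (n+2) → MPhase n N → ℝ) c)
        (((Fin.snoc (fun μ' => ((0, 0, fun _ ν' => if ν' = μ' then 1 else 0, 0) : MPhase n N)) w : Fin (n+2) → MPhase n N)) k)) = 0 := by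
      apply Matrix.det_eq_zero_of_row_eq_zero (0 : Fin (n+2))
      intro c
      have h0 : ((Fin.snoc (fun μ' => ((0, 0, fun _ ν' => if ν' = μ' then 1 else 0, 0) : MPhase n N)) w : Fin (n+2) → MPhase n N)) (0 : Fin (n+2)) = ((0, 0, fun _ ν' => if ν' = (0 : Fin (n+1)) then 1 else 0, 0) : MPhase n N) := by
        rw [show (0 : Fin (n+2)) = Fin.castSucc 0 from rfl, Fin.snoc_castSucc]
      refine Fin.cases ?_ (fun ν => ?_) c <;> simp [h0]
    simp only [h1, h2, mul_zero, Finset.sum_const_zero, add_zero]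
end

section
/- For n ≥ 2, not every smooth (n−r)-form f on the multisymplectic phase space P admits a Hamiltonean r-vectorfield: specifically, for r = 1, if f is an (n−1)-form such that df = i_X ω for some vector field X, then df must lie in the image subspace of contractions of ω, which is a proper subspace pointwise of all n-forms when N ≥ 1 and n ≥ 2. Concretely: there exists a smooth (n−1)-form f on P for which no vector field X satisfies df = i_X ω. -/
open scoped BigOperators

/-- Exterior derivative of a smooth alternating-form-valued map (a differential
form given pointwise as an alternating map), evaluated on constant vectors. -/
noncomputable def extDerAlt {n N : ℕ} {k : ℕ}
    (f : MPhase n N → AlternatingMap ℝ (MPhase n N) ℝ (Fin k))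
    (z : MPhase n N) (v : Fin (k+1) → MPhase n N) : ℝ :=
  ∑ j : Fin (k+1),
    (-1 : ℝ)^(j : ℕ) * fderiv ℝ (fun y => f y (fun l => v (j.succAbove l))) z (v j)

section Aux
variable (m N : ℕ)

def xcoordL (μ : Fin (m+2)) : MPhase (m+1) N →ₗ[ℝ] ℝ where
  toFun z := z.1 μ
  map_add' _ _ := rfl
  map_smul' _ _ := rfl

noncomputable def pcoordC (i : Fin N) (μ : Fin (m+2)) : MPhase (m+1) N →L[ℝ] ℝ :=
  (ContinuousLinearMap.proj μ).comp
    ((ContinuousLinearMap.proj i).comp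
      ((ContinuousLinearMap.fst ℝ (Fin N → Fin (m+2) → ℝ) ℝ).comp
        ((ContinuousLinearMap.snd ℝ (Fin N → ℝ) ((Fin N → Fin (m+2) → ℝ) × ℝ)).comp
          (ContinuousLinearMap.snd ℝ (Fin (m+2) → ℝ)
            ((Fin N → ℝ) × (Fin N → Fin (m+2) → ℝ) × ℝ)))))

@[simp] lemma pcoordC_apply (i : Fin N) (μ : Fin (m+2)) (z : MPhase (m+1) N) :
    pcoordC m N i μ z = z.2.2.1 i μ := rfl

noncomputable def myphi (i0 : Fin N) : Fin (m+1) → (MPhase (m+1) N →ₗ[ℝ] ℝ) :=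
  Fin.cons (pcoordC m N i0 1).toLinearMap
    (fun j : Fin m => xcoordL m N ⟨(j : ℕ) + 2, by omega⟩)

noncomputable def Aalt (i0 : Fin N) : AlternatingMap ℝ (MPhase (m+1) N) ℝ (Fin (m+1)) :=
  (Matrix.detRowAlternating).compLinearMap (LinearMap.pi (fun c => myphi m N i0 c))

lemma Aalt_apply (i0 : Fin N) (v : Fin (m+1) → MPhase (m+1) N) :
    Aalt m N i0 v = Matrix.det (Matrix.of fun k c => myphi m N i0 c (v k)) := rfl

def e1 (i0 : Fin N) : MPhase (m+1) N :=
  (0, 0, fun i μ => if i = i0 ∧ μ = 0 then 1 else 0, 0)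

def e2 (i0 : Fin N) : MPhase (m+1) N :=
  (0, 0, fun i μ => if i = i0 ∧ μ = 1 then 1 else 0, 0)

def xvec (j : Fin m) : MPhase (m+1) N :=
  (fun ν => if (ν : ℕ) = (j : ℕ) + 2 then 1 else 0, 0, 0, 0)

end Aux

lemma Aalt_val (m N : ℕ) (i0 : Fin N) :
    Aalt m N i0 (Fin.cons (e2 m N i0) (xvec m N)) = 1 := by
  rw [Aalt_apply]
  have hM : (Matrix.of fun k c => myphi m N i0 c ((Fin.cons (e2 m N i0) (xvec m N) : Fin (m+1) → MPhase (m+1) N) k))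
      = (1 : Matrix (Fin (m+1)) (Fin (m+1)) ℝ) := by
    funext k c
    refine Fin.cases ?_ (fun k' => ?_) k <;> refine Fin.cases ?_ (fun c' => ?_) c
    · simp [myphi, e2, Matrix.one_apply]
    · simp [myphi, e2, xcoordL, Matrix.one_apply, (Fin.succ_ne_zero c').symm]
    · simp [myphi, xvec, Matrix.one_apply, Fin.succ_ne_zero k']
    · simp only [Matrix.of_apply, Fin.cons_succ, myphi, xcoordL, xvec,
        Matrix.one_apply, LinearMap.coe_mk, AddHom.coe_mk]
      by_cases h : (k' : ℕ) = (c' : ℕ)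
      · simp [h, Fin.ext_iff]
      · simp [h, Fin.ext_iff]
        omega
  rw [hM, Matrix.det_one]

-- the big tuple of vectors
noncomputable def Vbig (m N : ℕ) (i0 : Fin N) : Fin (m+2) → MPhase (m+1) N :=
  Fin.cons (e1 m N i0) (Fin.cons (e2 m N i0) (xvec m N))

@[simp] lemma Vbig_zero (m N : ℕ) (i0 : Fin N) : Vbig m N i0 0 = e1 m N i0 := rfl

@[simp] lemma Vbig_one (m N : ℕ) (i0 : Fin N) : Vbig m N i0 1 = e2 m N i0 := by
  rw [Vbig, show (1 : Fin (m+2)) = Fin.succ 0 by ext; simp, Fin.cons_succ, Fin.cons_zero]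

lemma omega_vanish (m N : ℕ) (i0 : Fin N) (X : MPhase (m+1) N) :
    multisymplecticForm (m+1) N (Fin.cons X (Vbig m N i0)) = 0 := by
  have hW1 : (Fin.cons X (Vbig m N i0) : Fin (m+3) → MPhase (m+1) N) ⟨1, by omega⟩
      = e1 m N i0 := by
    rw [show (⟨1, by omega⟩ : Fin (m+3)) = Fin.succ ⟨0, by omega⟩ from rfl, Fin.cons_succ]
    simp [Vbig, show (⟨0, by omega⟩ : Fin (m+2)) = 0 from rfl]
  have hW2 : (Fin.cons X (Vbig m N i0) : Fin (m+3) → MPhase (m+1) N) ⟨2, by omega⟩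
      = e2 m N i0 := by
    rw [show (⟨2, by omega⟩ : Fin (m+3)) = Fin.succ ⟨1, by omega⟩ from rfl, Fin.cons_succ]
    rw [Vbig, show (⟨1, by omega⟩ : Fin (m+2)) = Fin.succ 0 from rfl, Fin.cons_succ,
      Fin.cons_zero]
  unfold multisymplecticForm
  rw [Finset.sum_eq_zero, Matrix.det_eq_zero_of_row_eq_zero ⟨1, by omega⟩, add_zero]
  · intro c
    refine Fin.cases ?_ (fun c' => ?_) c <;> simp [hW1, e1]
  · intro i _
    rw [Finset.sum_eq_zero]
    intro μ _
    by_cases hμ : μ = 0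
    · rw [Matrix.det_eq_zero_of_row_eq_zero ⟨2, by omega⟩, mul_zero]
      intro c
      refine Fin.cases ?_ (fun c' => ?_) c
      · simp [hW2, e2]
      · refine Fin.cases ?_ (fun c'' => ?_) c' <;>
          simp [hW2, e2, hμ, Fin.ext_iff]
    · rw [Matrix.det_eq_zero_of_row_eq_zero ⟨1, by omega⟩, mul_zero]
      intro c
      refine Fin.cases ?_ (fun c' => ?_) c
      · simp [hW1, e1]
      · refine Fin.cases ?_ (fun c'' => ?_) c' <;>
          simp [hW1, e1, hμ, Ne.symm hμ]

lemma extDer_val (m N : ℕ) (i0 : Fin N) (z : MPhase (m+1) N) :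
    extDerAlt (fun y => pcoordC m N i0 0 y • Aalt m N i0) z (Vbig m N i0) = 1 := by
  have key : ∀ (w : Fin (m+1) → MPhase (m+1) N) (u : MPhase (m+1) N),
      fderiv ℝ (fun y => (pcoordC m N i0 0 y • Aalt m N i0) w) z u
        = Aalt m N i0 w * pcoordC m N i0 0 u := by
    intro w u
    have h1 : (fun y : MPhase (m+1) N => (pcoordC m N i0 0 y • Aalt m N i0) w)
        = fun y => pcoordC m N i0 0 y * Aalt m N i0 w := by
      funext y; simp
    rw [h1, ((pcoordC m N i0 0).hasFDerivAt.mul_const (Aalt m N i0 w)).fderiv]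
    simp [mul_comm]
  unfold extDerAlt
  simp only [key]
  rw [Fin.sum_univ_succ]
  have h0 : (fun l => Vbig m N i0 ((0 : Fin (m+2)).succAbove l))
      = Fin.cons (e2 m N i0) (xvec m N) := by
    funext l
    rw [Fin.zero_succAbove, Vbig, Fin.cons_succ]
  rw [h0, Aalt_val]
  have h2 : ∀ j : Fin (m+1), pcoordC m N i0 0 (Vbig m N i0 (Fin.succ j)) = 0 := by
    intro j
    rw [Vbig, Fin.cons_succ]
    refine Fin.cases ?_ (fun j' => ?_) j
    · simp [e2, Fin.ext_iff]
    · simp [xvec]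
  rw [Finset.sum_eq_zero]
  · simp [Vbig, e1]
  · intro j _
    rw [h2]
    simp


/- STATEMENT 16: for space-time dimension n+1 ≥ 2 (and N ≥ 1), not every smooth
(n+1-1)-form f on P is Hamiltonean: there is a smooth n-form f such that no vector
field X satisfies df = i_X ω. -/
theorem exists_nonHamiltonean_form (n N : ℕ) (hn : 1 ≤ n) (hN : 1 ≤ N) :
    ∃ f : MPhase n N → AlternatingMap ℝ (MPhase n N) ℝ (Fin n),
      (∀ v : Fin n → MPhase n N, ContDiff ℝ (⊤ : ℕ∞) (fun z => f z v)) ∧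
      ¬ ∃ X : MPhase n N → MPhase n N,
          ∀ (z : MPhase n N) (v : Fin (n+1) → MPhase n N),
            extDerAlt f z v = multisymplecticForm n N (Fin.cons (X z) v) := by
  obtain ⟨m, rfl⟩ : ∃ m, n = m + 1 := ⟨n - 1, by omega⟩
  set i0 : Fin N := ⟨0, hN⟩
  refine ⟨fun y => pcoordC m N i0 0 y • Aalt m N i0, ?_, ?_⟩
  · intro v
    simp only [AlternatingMap.smul_apply, smul_eq_mul]
    exact (pcoordC m N i0 0).contDiff.mul contDiff_const
  · rintro ⟨X, hX⟩
    have h := hX 0 (Vbig m N i0)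
    rw [omega_vanish, extDer_val] at h
    exact one_ne_zero h
end
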